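/- Let 1 < p < ∞ and let Φ : (0,∞) → (0,∞) be an increasing function such that ‖S‖_{L^p(w)→L^{p,∞}(w)} ≤ Φ([w]_{A_p}) for every weight w on ℝ with [w]_{A_p} < ∞. Then there exist constants c > 0 and t_0 > 0, depending only on p, such that Φ(t) ≥ c·t^{1/2} for all t ≥ t_0. -/

import Mathlib

open MeasureTheory ENNReal NNReal Set

noncomputable section

namespace Paper1D

/-- The dyadic interval `[2^{-k} m, 2^{-k}(m+1))`. -/
def dyadicI (k m : ℤ) : Set ℝ := Set.Ico ((2:ℝ) ^ (-k) * m) ((2:ℝ) ^ (-k) * (m + 1))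

/-- The Haar function `h_I = |I|^{-1/2} (1_{I_-} - 1_{I_+})` of the dyadic
interval `I = [2^{-k} m, 2^{-k}(m+1))`. -/
def haar (k m : ℤ) (x : ℝ) : ℝ :=
  (2:ℝ) ^ ((k : ℝ) / 2) *
    (Set.indicator (Set.Ico ((2:ℝ) ^ (-k) * m) ((2:ℝ) ^ (-k) * (m + 1/2))) (fun _ => (1:ℝ)) x
      - Set.indicator (Set.Ico ((2:ℝ) ^ (-k) * (m + 1/2)) ((2:ℝ) ^ (-k) * (m + 1))) (fun _ => (1:ℝ)) x)

/-- The Haar square function `Sf = (∑_I (1_I/|I|) |⟨h_I, f⟩|²)^{1/2}`. -/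
def haarSq (f : ℝ → ℝ) (x : ℝ) : ℝ≥0∞ :=
  (∑' km : ℤ × ℤ, (dyadicI km.1 km.2).indicator
      (fun _ => (volume (dyadicI km.1 km.2))⁻¹ *
        (‖∫ y, haar km.1 km.2 y * f y‖₊ : ℝ≥0∞) ^ 2) x) ^ (1/2 : ℝ)

/-- `‖f‖_{L^p(w)} = (∫ |f|^p w)^{1/p}`. -/
def lpNorm1 (p : ℝ) (w : ℝ → ℝ≥0∞) (f : ℝ → ℝ) : ℝ≥0∞ :=
  (∫⁻ x, (‖f x‖₊ : ℝ≥0∞) ^ p * w x) ^ (1/p)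

/-- `‖g‖_{L^{p,∞}(w)} = sup_{t>0} t · w({g > t})^{1/p}`. -/
def wLpNorm1 (p : ℝ) (w : ℝ → ℝ≥0∞) (g : ℝ → ℝ≥0∞) : ℝ≥0∞ :=
  ⨆ (t : ℝ≥0) (_ : 0 < t), (t : ℝ≥0∞) * (∫⁻ x in {x | (t : ℝ≥0∞) < g x}, w x) ^ (1/p)

/-- `‖S‖_{L^p(w) → L^{p,∞}(w)}`, the least constant `C` such that
`‖Sf‖_{L^{p,∞}(w)} ≤ C ‖f‖_{L^p(w)}` for all `f ∈ L^p(w)`. -/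
def sqOpNorm (p : ℝ) (w : ℝ → ℝ≥0∞) : ℝ≥0∞ :=
  sInf {C : ℝ≥0∞ | ∀ f : ℝ → ℝ, Measurable f → lpNorm1 p w f ≠ ∞ →
    wLpNorm1 p w (haarSq f) ≤ C * lpNorm1 p w f}

/-- Average `⟨w⟩_I = |I|⁻¹ ∫_I w`. -/
def avg1 (w : ℝ → ℝ≥0∞) (I : Set ℝ) : ℝ≥0∞ := (volume I)⁻¹ * ∫⁻ x in I, w x

/-- The dyadic `A_p` characteristic, with the dual weight `σ = w^{1-p'}`. -/
def Ap1 (p : ℝ) (w : ℝ → ℝ≥0∞) : ℝ≥0∞ :=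
  ⨆ km : ℤ × ℤ, avg1 w (dyadicI km.1 km.2) *
    (avg1 (fun x => (w x) ^ (1 - p / (p - 1))) (dyadicI km.1 km.2)) ^ (p - 1)

/-!
For `N ≥ 1` let `w_N` be `1` off `[0, 1)`, `2^n` on the shell `[2^{-n-1}, 2^{-n})` for `n < N`,
and `N 2^{N-1}` on `[0, 2^{-N})`. Every dyadic interval other than `[0, 2^{-k})` with `k < N`
lies in a region where `w_N` is constant, and for the intervals `[0, 2^{-k})` the averages of
`w_N` and of `σ = w_N^{1-p'}` are controlled by `∫_0^1 w_N = N` and a geometric series; hence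
`[w_N]_{A_p} ≤ 2^{p+1} N`.

The test function is `f_N = ∑_{j<N} (-1)^j |I_j|^{1/2} h_{I_j}` with `I_j = [0, 2^{-j})`. At each
point it is a partial sum of `1 - 1 + 1 - ⋯` plus at most one more `±1`, so `|f_N| ≤ 2` and
`‖f_N‖_{L^p(w_N)} ≤ 2 N^{1/p}`. Each of its `N` Haar coefficients contributes `1` to `(S f_N)²` on
`[0, 2^{-N})`, a set of `w_N`-mass `N / 2`, so `‖S‖_{L^p(w_N) → L^{p,∞}(w_N)} ≥ √N / 8`.
Monotonicity of `Φ` turns this family of examples into `Φ(t) ≳ √t`.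
-/

lemma le_of_forall_nat_le {Φ : ℝ → ℝ} (hΦ : ∀ s t : ℝ, 0 < s → s ≤ t → Φ s ≤ Φ t)
    {C c a : ℝ} (hC : 0 < C) (hc : 0 ≤ c) (ha : 0 ≤ a)
    (h : ∀ N : ℕ, 1 ≤ N → ∃ s, 0 < s ∧ s ≤ C * N ∧ c * (N:ℝ) ^ a ≤ Φ s)
    {t : ℝ} (ht : 2 * C ≤ t) : c / (2 * C) ^ a * t ^ a ≤ Φ t := by
  have htC : 2 ≤ t / C := (le_div_iff₀ hC).2 (by linarith)
  set N := ⌊t / C⌋₊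
  obtain ⟨s, hs0, hsN, hΦs⟩ := h N (Nat.le_floor (by push_cast; linarith))
  have hNt : C * N ≤ t := by
    have := Nat.floor_le (by linarith : 0 ≤ t / C)
    rw [le_div_iff₀ hC] at this
    linarith
  have hNlow : t / (2 * C) ≤ N := by
    have := Nat.lt_floor_add_one (t / C)
    rw [mul_comm, ← div_div]
    linarith
  calc c / (2 * C) ^ a * t ^ a = c * (t / (2 * C)) ^ a := by
        rw [Real.div_rpow (by linarith) (by positivity)]
        ring
    _ ≤ c * (N:ℝ) ^ a := by
        have : 0 ≤ t / (2 * C) := div_nonneg (by linarith) (by linarith)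
        gcongr
    _ ≤ Φ s := hΦs
    _ ≤ Φ t := hΦ s t hs0 (hsN.trans hNt)

lemma ofReal_two_zpow (z : ℤ) : ENNReal.ofReal ((2:ℝ) ^ z) = (2:ℝ≥0∞) ^ (z:ℝ) := by
  rw [← Real.rpow_intCast, ← ENNReal.ofReal_rpow_of_pos two_pos, ENNReal.ofReal_ofNat]

lemma two_rpow_add (a b : ℝ) : (2:ℝ≥0∞) ^ (a + b) = 2 ^ a * 2 ^ b :=
  ENNReal.rpow_add a b two_ne_zero ofNat_ne_top

lemma two_rpow_ne_zero (a : ℝ) : (2:ℝ≥0∞) ^ a ≠ 0 :=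
  (ENNReal.rpow_pos two_pos ofNat_ne_top).ne'

lemma two_rpow_ne_top (a : ℝ) : (2:ℝ≥0∞) ^ a ≠ ∞ :=
  ENNReal.rpow_ne_top_of_ne_zero two_ne_zero ofNat_ne_top

lemma two_zpow_le_one {n : ℤ} (hn : n ≤ 0) : (2:ℝ) ^ n ≤ 1 :=
  zpow_le_one_of_nonpos₀ one_le_two hn

lemma volume_Ico_zero_two_zpow (k : ℤ) :
    volume (Ico (0:ℝ) (2 ^ (-k))) = 2 ^ (-(k:ℝ)) := by
  rw [Real.volume_Ico, sub_zero, ofReal_two_zpow, Int.cast_neg]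

lemma dyadicI_zero (k : ℤ) : dyadicI k 0 = Ico (0:ℝ) (2 ^ (-k)) := by
  simp [dyadicI]

lemma measurableSet_dyadicI (k m : ℤ) : MeasurableSet (dyadicI k m) := measurableSet_Ico

lemma volume_dyadicI (k m : ℤ) : volume (dyadicI k m) = 2 ^ (-(k:ℝ)) := by
  rw [dyadicI, Real.volume_Ico, ← volume_Ico_zero_two_zpow, Real.volume_Ico]
  ring_nf

lemma volume_dyadicI_ne_zero (k m : ℤ) : volume (dyadicI k m) ≠ 0 := by
  rw [volume_dyadicI]
  exact two_rpow_ne_zero _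

lemma volume_dyadicI_ne_top (k m : ℤ) : volume (dyadicI k m) ≠ ∞ := by
  rw [volume_dyadicI]
  exact two_rpow_ne_top _

lemma inv_volume_dyadicI (k m : ℤ) : (volume (dyadicI k m))⁻¹ = 2 ^ (k:ℝ) := by
  rw [volume_dyadicI, ← ENNReal.rpow_neg_one, ← ENNReal.rpow_mul, neg_mul_neg, mul_one]

lemma dyadicI_subset_Ico_two_zpow {k m : ℤ} (hm : 0 < m) :
    ∃ L : ℤ, dyadicI k m ⊆ Ico ((2:ℝ) ^ L) (2 ^ (L + 1)) := by
  lift m to ℕ using hm.le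
  have hlow : 2 ^ Nat.log 2 m ≤ m := Nat.pow_log_le_self 2 (by omega)
  have hhigh : m + 1 ≤ 2 ^ (Nat.log 2 m + 1) := Nat.lt_pow_succ_log_self one_lt_two m
  refine ⟨Nat.log 2 m - k, fun x ⟨hx1, hx2⟩ => ⟨?_, ?_⟩⟩
  · calc (2:ℝ) ^ ((Nat.log 2 m : ℤ) - k) = 2 ^ (-k) * (2 ^ Nat.log 2 m : ℕ) := by
          rw [sub_eq_neg_add, zpow_add₀ two_ne_zero, zpow_natCast]
          push_cast
          rfl
      _ ≤ 2 ^ (-k) * m := by gcongr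
      _ ≤ x := by exact_mod_cast hx1
  · calc x < 2 ^ (-k) * ((m:ℤ) + 1 : ℝ) := hx2
      _ ≤ 2 ^ (-k) * (2 ^ (Nat.log 2 m + 1) : ℕ) := by gcongr; exact_mod_cast hhigh
      _ = (2:ℝ) ^ ((Nat.log 2 m : ℤ) - k + 1) := by
          rw [sub_add_eq_add_sub, sub_eq_neg_add, zpow_add₀ two_ne_zero]
          push_cast
          rfl

def shell (n : ℤ) : Set ℝ := Ico ((2:ℝ) ^ (-n - 1)) (2 ^ (-n))

lemma measurableSet_shell (n : ℤ) : MeasurableSet (shell n) := measurableSet_Ico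

lemma volume_shell (k : ℤ) : volume (shell k) = 2 ^ (-(k:ℝ) - 1) := by
  have h : (2:ℝ) ^ (-k) - 2 ^ (-k - 1) = 2 ^ (-k - 1) := by
    rw [show -k = -k - 1 + 1 by ring, zpow_add_one₀ two_ne_zero]
    ring_nf
  rw [shell, Real.volume_Ico, h, ofReal_two_zpow]
  push_cast
  ring_nf

lemma Ico_zero_two_zpow_eq_union (k : ℤ) :
    Ico (0:ℝ) (2 ^ (-k)) = Ico 0 (2 ^ (-k - 1)) ∪ shell k :=
  (Ico_union_Ico_eq_Ico (_root_.zpow_pos two_pos _).le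
    (zpow_le_zpow_right₀ one_le_two (by omega))).symm

lemma setLIntegral_Ico_zero_two_zpow (f : ℝ → ℝ≥0∞) (k : ℤ) :
    ∫⁻ x in Ico (0:ℝ) (2 ^ (-k)), f x
      = (∫⁻ x in Ico (0:ℝ) (2 ^ (-k - 1)), f x) + ∫⁻ x in shell k, f x := by
  rw [Ico_zero_two_zpow_eq_union]
  exact lintegral_union (measurableSet_shell k) Ico_disjoint_Ico_same

lemma eq_of_mem_shell {x : ℝ} {n m : ℤ} (hn : x ∈ shell n) (hm : x ∈ shell m) : n = m := by
  have h1 : (2:ℝ) ^ (-n - 1) < 2 ^ (-m) := hn.1.trans_lt hm.2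
  have h2 : (2:ℝ) ^ (-m - 1) < 2 ^ (-n) := hm.1.trans_lt hn.2
  rw [zpow_lt_zpow_iff_right₀ _root_.one_lt_two] at h1 h2
  omega

lemma le_of_mem_shell_of_lt {x : ℝ} {n k : ℤ} (hn : x ∈ shell n) (hx : x < 2 ^ (-k)) :
    k ≤ n := by
  have h : (2:ℝ) ^ (-n - 1) < 2 ^ (-k) := hn.1.trans_lt hx
  rw [zpow_lt_zpow_iff_right₀ _root_.one_lt_two] at h
  omega

lemma shell_subset_Ico_zero_one (n : ℕ) : shell n ⊆ Ico 0 1 := fun _ hx =>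
  ⟨(_root_.zpow_pos two_pos _).le.trans hx.1, hx.2.trans_le (two_zpow_le_one (by omega))⟩

lemma Ico_zero_two_zpow_subset_Ico_zero_one {k : ℤ} (hk : 0 ≤ k) :
    Ico (0:ℝ) (2 ^ (-k)) ⊆ Ico 0 1 :=
  Ico_subset_Ico le_rfl (two_zpow_le_one (by omega))

lemma exists_lt_mem_shell {N : ℕ} {x : ℝ} (hx : x ∈ Ico ((2:ℝ) ^ (-(N:ℤ))) 1) :
    ∃ n < N, x ∈ shell n := by
  induction N with
  | zero => simp at hx
  | succ N ih =>
    by_cases h : (2:ℝ) ^ (-(N:ℤ)) ≤ x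
    · obtain ⟨n, hn, hxn⟩ := ih ⟨h, hx.2⟩
      exact ⟨n, by omega, hxn⟩
    · refine ⟨N, by omega, ?_, not_le.1 h⟩
      convert hx.1 using 2
      push_cast
      ring

lemma avg1_of_eqOn {w : ℝ → ℝ≥0∞} {I : Set ℝ} {v : ℝ≥0∞} (hI : MeasurableSet I)
    (h0 : volume I ≠ 0) (htop : volume I ≠ ∞) (hw : EqOn w (fun _ => v) I) : avg1 w I = v := by
  rw [avg1, setLIntegral_congr_fun hI hw, setLIntegral_const, mul_comm,
    mul_assoc, ENNReal.mul_inv_cancel h0 htop, mul_one]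

/-- `⟨w⟩_I ⟨σ⟩_I^{p-1}`, so that `Ap1 p w` is the supremum of `apTerm p w I` over dyadic `I`. -/
def apTerm (p : ℝ) (w : ℝ → ℝ≥0∞) (I : Set ℝ) : ℝ≥0∞ :=
  avg1 w I * avg1 (fun x => w x ^ (1 - p / (p - 1))) I ^ (p - 1)

lemma apTerm_eq_one_of_eqOn {p : ℝ} (hp : p ≠ 1) {w : ℝ → ℝ≥0∞} {I : Set ℝ} {v : ℝ≥0∞}
    (hI : MeasurableSet I) (h0 : volume I ≠ 0) (htop : volume I ≠ ∞) (hv0 : v ≠ 0)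
    (hvtop : v ≠ ∞) (hw : EqOn w (fun _ => v) I) : apTerm p w I = 1 := by
  have hexp : (1 - p / (p - 1)) * (p - 1) = -1 := by
    field_simp [sub_ne_zero.2 hp]
    ring
  rw [apTerm, avg1_of_eqOn hI h0 htop hw,
    avg1_of_eqOn hI h0 htop (v := v ^ (1 - p / (p - 1))) fun x hx => by simp [hw hx],
    ← ENNReal.rpow_mul, hexp, ENNReal.rpow_neg_one, ENNReal.mul_inv_cancel hv0 hvtop]

lemma avg1_dyadicI_zero_le_of_nonpos {f : ℝ → ℝ≥0∞} (hf : ∀ x, x ∉ Ico (0:ℝ) 1 → f x = 1)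
    {k : ℤ} (hk : k ≤ 0) : avg1 f (dyadicI k 0) ≤ (∫⁻ x in Ico (0:ℝ) 1, f x) + 1 := by
  have hsplit : Ico (0:ℝ) (2 ^ (-k)) = Ico 0 1 ∪ Ico 1 (2 ^ (-k)) :=
    (Ico_union_Ico_eq_Ico zero_le_one (one_le_zpow₀ one_le_two (by omega))).symm
  have hout : ∫⁻ x in Ico (1:ℝ) (2 ^ (-k)), f x ≤ 2 ^ (-(k:ℝ)) := by
    rw [setLIntegral_congr_fun measurableSet_Ico fun x hx => hf x fun h => h.2.not_ge hx.1,
      setLIntegral_const, one_mul, ← volume_Ico_zero_two_zpow]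
    exact measure_mono (Ico_subset_Ico zero_le_one le_rfl)
  calc avg1 f (dyadicI k 0)
      ≤ 2 ^ (k:ℝ) * ((∫⁻ x in Ico (0:ℝ) 1, f x) + 2 ^ (-(k:ℝ))) := by
        rw [avg1, inv_volume_dyadicI, dyadicI_zero, hsplit]
        gcongr
        exact (lintegral_union_le _ _ _).trans (add_le_add le_rfl hout)
    _ = 2 ^ (k:ℝ) * (∫⁻ x in Ico (0:ℝ) 1, f x) + 1 := by
        rw [mul_add, ← two_rpow_add, add_neg_cancel, ENNReal.rpow_zero]
    _ ≤ (∫⁻ x in Ico (0:ℝ) 1, f x) + 1 := by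
        gcongr
        exact mul_le_of_le_one_left zero_le
          ((ENNReal.rpow_le_rpow_of_exponent_le one_le_two (by exact_mod_cast hk)).trans_eq
            ENNReal.rpow_zero)

/-! ### The weight `w_N` -/

def tailWeight (N : ℕ) : ℝ≥0∞ := N * 2 ^ ((N:ℝ) - 1)

lemma tailWeight_ne_zero {N : ℕ} (hN : 1 ≤ N) : tailWeight N ≠ 0 :=
  mul_ne_zero (by exact_mod_cast (by omega : N ≠ 0)) (two_rpow_ne_zero _)

lemma tailWeight_ne_top (N : ℕ) : tailWeight N ≠ ∞ :=
  mul_ne_top (natCast_ne_top N) (two_rpow_ne_top _)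

def weight (N : ℕ) (x : ℝ) : ℝ≥0∞ :=
  (Ico (0:ℝ) 1)ᶜ.indicator 1 x + (Ico (0:ℝ) (2 ^ (-(N:ℤ)))).indicator (fun _ => tailWeight N) x
    + ∑ n ∈ Finset.range N, (shell n).indicator (fun _ => 2 ^ (n:ℝ)) x

lemma measurable_weight (N : ℕ) : Measurable (weight N) :=
  ((measurable_const.indicator measurableSet_Ico.compl).add
    (measurable_const.indicator measurableSet_Ico)).add
    (Finset.measurable_sum _ fun _ _ => measurable_const.indicator measurableSet_Ico)

lemma weight_le (N : ℕ) (x : ℝ) :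
    weight N x ≤ 1 + tailWeight N + ∑ n ∈ Finset.range N, (2:ℝ≥0∞) ^ (n:ℝ) := by
  unfold weight
  gcongr with n <;> exact indicator_apply_le' (fun _ => le_rfl) (fun _ => zero_le)

lemma weight_of_notMem {N : ℕ} {x : ℝ} (hx : x ∉ Ico (0:ℝ) 1) : weight N x = 1 := by
  have htail : x ∉ Ico (0:ℝ) (2 ^ (-(N:ℤ))) :=
    fun h => hx (Ico_zero_two_zpow_subset_Ico_zero_one (by omega) h)
  have hshell : ∀ n : ℕ, x ∉ shell n := fun n h => hx (shell_subset_Ico_zero_one n h)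
  rw [weight, indicator_of_mem (mem_compl hx), indicator_of_notMem htail,
    Finset.sum_eq_zero fun n _ => indicator_of_notMem (hshell n) _]
  simp

lemma weight_of_mem_tail {N : ℕ} {x : ℝ} (hx : x ∈ Ico (0:ℝ) (2 ^ (-(N:ℤ)))) :
    weight N x = tailWeight N := by
  have hx1 : x ∈ Ico (0:ℝ) 1 := Ico_zero_two_zpow_subset_Ico_zero_one (by omega) hx
  have hshell : ∀ n ∈ Finset.range N, x ∉ shell n := fun n hn h => by
    have := le_of_mem_shell_of_lt h hx.2
    simp at hn
    omega
  rw [weight, indicator_of_notMem (notMem_compl_iff.2 hx1), indicator_of_mem hx,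
    Finset.sum_eq_zero fun n hn => indicator_of_notMem (hshell n hn) _]
  simp

lemma weight_of_mem_shell {N n : ℕ} (hn : n < N) {x : ℝ} (hx : x ∈ shell n) :
    weight N x = 2 ^ (n:ℝ) := by
  have hx1 : x ∈ Ico (0:ℝ) 1 := shell_subset_Ico_zero_one n hx
  have htail : x ∉ Ico (0:ℝ) (2 ^ (-(N:ℤ))) := fun h => by
    have := le_of_mem_shell_of_lt hx h.2
    omega
  rw [weight, Finset.sum_eq_single n (fun m _ hmn => indicator_of_notMem
    (fun h => hmn (by exact_mod_cast eq_of_mem_shell h hx)) _) (by simp [hn]),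
    indicator_of_notMem (notMem_compl_iff.2 hx1), indicator_of_notMem htail, indicator_of_mem hx]
  simp

lemma setLIntegral_weight_dyadicI_lt_top (N : ℕ) (k m : ℤ) :
    ∫⁻ x in dyadicI k m, weight N x < ∞ := by
  refine (setLIntegral_mono' (measurableSet_dyadicI k m) fun x _ => weight_le N x).trans_lt ?_
  rw [setLIntegral_const]
  refine mul_lt_top (add_lt_top.2 ⟨add_lt_top.2 ⟨one_lt_top, ?_⟩, ?_⟩)
    (volume_dyadicI_ne_top k m).lt_top
  · exact (tailWeight_ne_top N).lt_top
  · exact sum_lt_top.2 fun n _ => (two_rpow_ne_top _).lt_top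

lemma setLIntegral_weight_tail (N : ℕ) :
    ∫⁻ x in Ico (0:ℝ) (2 ^ (-(N:ℤ))), weight N x = N * 2⁻¹ := by
  rw [setLIntegral_congr_fun measurableSet_Ico fun x hx => weight_of_mem_tail hx,
    setLIntegral_const, volume_Ico_zero_two_zpow, tailWeight, mul_assoc, ← two_rpow_add,
    show (N:ℝ) - 1 + -((N:ℤ):ℝ) = -1 by push_cast; ring, ENNReal.rpow_neg_one]

lemma setLIntegral_weight_shell {N n : ℕ} (hn : n < N) :
    ∫⁻ x in shell n, weight N x = 2⁻¹ := by
  rw [setLIntegral_congr_fun (measurableSet_shell n) fun x hx => weight_of_mem_shell hn hx,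
    setLIntegral_const, volume_shell, ← two_rpow_add,
    show (n:ℝ) + (-((n:ℤ):ℝ) - 1) = -1 by push_cast; ring, ENNReal.rpow_neg_one]

lemma setLIntegral_weight_Ico_zero {N k j : ℕ} (hkj : k + j = N) :
    ∫⁻ x in Ico (0:ℝ) (2 ^ (-(k:ℤ))), weight N x = (N + j) * 2⁻¹ := by
  induction j generalizing k with
  | zero => simp only [← hkj, add_zero, CharP.cast_eq_zero, setLIntegral_weight_tail]
  | succ j ih =>
    rw [setLIntegral_Ico_zero_two_zpow, show -(k:ℤ) - 1 = -((k + 1 : ℕ) : ℤ) by push_cast; ring,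
      ih (by omega), setLIntegral_weight_shell (by omega)]
    push_cast
    ring

lemma setLIntegral_weight_Ico_zero_one (N : ℕ) : ∫⁻ x in Ico (0:ℝ) 1, weight N x = N := by
  have h := setLIntegral_weight_Ico_zero (N := N) (k := 0) (j := N) (by omega)
  rw [Int.natCast_zero, neg_zero, zpow_zero, ← two_mul, mul_comm, ← mul_assoc,
    ENNReal.inv_mul_cancel two_ne_zero ofNat_ne_top, one_mul] at h
  exact h

/-! ### The dual weight `w_N^{1-p'}` -/

lemma one_sub_div_sub_one {p : ℝ} (hp : 1 < p) : 1 - p / (p - 1) = -(1 / (p - 1)) := by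
  field_simp [(sub_pos.2 hp).ne']
  ring

lemma div_sub_one_eq {p : ℝ} (hp : 1 < p) : p / (p - 1) = 1 + 1 / (p - 1) := by
  field_simp [(sub_pos.2 hp).ne']
  ring

lemma weight_rpow_of_mem_shell {N n : ℕ} (hn : n < N) {x : ℝ} (hx : x ∈ shell n) (a : ℝ) :
    weight N x ^ a = 2 ^ (n * a) := by
  rw [weight_of_mem_shell hn hx, ← ENNReal.rpow_mul]

lemma setLIntegral_weight_rpow_shell {p : ℝ} (hp : 1 < p) {N n : ℕ} (hn : n < N) :
    ∫⁻ x in shell n, weight N x ^ (1 - p / (p - 1)) = 2 ^ (-(n * (p / (p - 1))) - 1) := by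
  rw [setLIntegral_congr_fun (measurableSet_shell n) fun x hx => weight_rpow_of_mem_shell hn hx _,
    setLIntegral_const, volume_shell, ← two_rpow_add, div_sub_one_eq hp]
  push_cast
  ring_nf

lemma setLIntegral_weight_rpow_tail_le {p : ℝ} (hp : 1 < p) {N : ℕ} (hN : 1 ≤ N) :
    ∫⁻ x in Ico (0:ℝ) (2 ^ (-(N:ℤ))), weight N x ^ (1 - p / (p - 1))
      ≤ 2 ^ (1 / (p - 1) - N * (p / (p - 1))) := by
  have hr : 0 ≤ 1 / (p - 1) := (one_div_pos.2 (sub_pos.2 hp)).le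
  have htail : (2:ℝ≥0∞) ^ ((N:ℝ) - 1) ≤ tailWeight N :=
    le_mul_of_one_le_left zero_le (by exact_mod_cast hN)
  have hσ : tailWeight N ^ (1 - p / (p - 1)) ≤ 2 ^ (((N:ℝ) - 1) * (1 - p / (p - 1))) := by
    rw [ENNReal.rpow_mul, one_sub_div_sub_one hp, ENNReal.rpow_neg, ENNReal.rpow_neg]
    exact ENNReal.inv_le_inv.2 (ENNReal.rpow_le_rpow htail hr)
  calc ∫⁻ x in Ico (0:ℝ) (2 ^ (-(N:ℤ))), weight N x ^ (1 - p / (p - 1))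
      = tailWeight N ^ (1 - p / (p - 1)) * 2 ^ (-(N:ℝ)) := by
        rw [setLIntegral_congr_fun measurableSet_Ico fun x hx => by rw [weight_of_mem_tail hx],
          setLIntegral_const, volume_Ico_zero_two_zpow, Int.cast_natCast]
    _ ≤ 2 ^ (((N:ℝ) - 1) * (1 - p / (p - 1))) * 2 ^ (-(N:ℝ)) := by gcongr
    _ = 2 ^ (1 / (p - 1) - N * (p / (p - 1))) := by
        rw [← two_rpow_add, one_sub_div_sub_one hp, div_sub_one_eq hp]
        ring_nf

lemma two_rpow_sub_add_two_rpow_le {r q : ℝ} (hr : 0 ≤ r) (hq : 1 ≤ q) (a : ℝ) :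
    (2:ℝ≥0∞) ^ (r - (a + 1) * q) + 2 ^ (-(a * q) - 1) ≤ 2 ^ (r - a * q) := by
  have h1 : (2:ℝ≥0∞) ^ (r - (a + 1) * q) ≤ 2 ^ (r - a * q) * 2⁻¹ := by
    rw [← ENNReal.rpow_neg_one, ← two_rpow_add]
    exact ENNReal.rpow_le_rpow_of_exponent_le one_le_two (by nlinarith)
  have h2 : (2:ℝ≥0∞) ^ (-(a * q) - 1) ≤ 2 ^ (r - a * q) * 2⁻¹ := by
    rw [← ENNReal.rpow_neg_one, ← two_rpow_add]
    exact ENNReal.rpow_le_rpow_of_exponent_le one_le_two (by linarith)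
  calc _ ≤ 2 ^ (r - a * q) * 2⁻¹ + 2 ^ (r - a * q) * 2⁻¹ := add_le_add h1 h2
    _ = 2 ^ (r - a * q) := by rw [← mul_add, ENNReal.inv_two_add_inv_two, mul_one]

lemma setLIntegral_weight_rpow_Ico_zero_le {p : ℝ} (hp : 1 < p) {N k j : ℕ} (hN : 1 ≤ N)
    (hkj : k + j = N) :
    ∫⁻ x in Ico (0:ℝ) (2 ^ (-(k:ℤ))), weight N x ^ (1 - p / (p - 1))
      ≤ 2 ^ (1 / (p - 1) - k * (p / (p - 1))) := by
  -- The factor `2^{1/(p-1)}` comes from the tail; each added shell is absorbed because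
  -- `2^{-p'} ≤ 1/2`.
  induction j generalizing k with
  | zero => simpa [← hkj] using setLIntegral_weight_rpow_tail_le hp hN
  | succ j ih =>
    have hq : 1 ≤ p / (p - 1) := by
      rw [div_sub_one_eq hp]
      exact le_add_of_nonneg_right (one_div_pos.2 (sub_pos.2 hp)).le
    rw [setLIntegral_Ico_zero_two_zpow, setLIntegral_weight_rpow_shell hp (by omega),
      show -(k:ℤ) - 1 = -((k + 1 : ℕ) : ℤ) by push_cast; ring]
    refine le_trans (add_le_add_left (ih (by omega)) _) ?_
    push_cast
    exact two_rpow_sub_add_two_rpow_le (one_div_pos.2 (sub_pos.2 hp)).le hq k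

/-! ### The `A_p` characteristic of `w_N` -/

lemma weight_eqOn_Ico_two_zpow {N : ℕ} (hN : 1 ≤ N) (L : ℤ) :
    ∃ v : ℝ≥0∞, v ≠ 0 ∧ v ≠ ∞ ∧
      EqOn (weight N) (fun _ => v) (Ico ((2:ℝ) ^ L) (2 ^ (L + 1))) := by
  rcases le_or_gt 0 L with hL | hL
  · refine ⟨1, one_ne_zero, one_ne_top, fun x hx => weight_of_notMem fun h => ?_⟩
    exact (h.2.trans_le (one_le_zpow₀ one_le_two hL)).not_ge hx.1
  rcases le_or_gt (-(N:ℤ)) L with hLN | hLN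
  · lift -L - 1 to ℕ using (by omega) with n hn
    have hshell : Ico ((2:ℝ) ^ L) (2 ^ (L + 1)) = shell n := by
      rw [shell, hn]
      ring_nf
    refine ⟨2 ^ (n:ℝ), two_rpow_ne_zero _, two_rpow_ne_top _, fun x hx => ?_⟩
    exact weight_of_mem_shell (by omega) (hshell ▸ hx)
  · refine ⟨tailWeight N, tailWeight_ne_zero hN, tailWeight_ne_top N,
      fun x hx => weight_of_mem_tail ?_⟩
    exact ⟨(_root_.zpow_pos two_pos L).le.trans hx.1,
      hx.2.trans_le (zpow_le_zpow_right₀ one_le_two (by omega))⟩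

lemma weight_eqOn_dyadicI {N : ℕ} (hN : 1 ≤ N) {k m : ℤ} (h : m ≠ 0 ∨ (N:ℤ) ≤ k) :
    ∃ v : ℝ≥0∞, v ≠ 0 ∧ v ≠ ∞ ∧ EqOn (weight N) (fun _ => v) (dyadicI k m) := by
  rcases lt_trichotomy m 0 with hm | rfl | hm
  · refine ⟨1, one_ne_zero, one_ne_top, fun x hx => weight_of_notMem fun h => ?_⟩
    have : (2:ℝ) ^ (-k) * ((m:ℝ) + 1) ≤ 0 :=
      mul_nonpos_of_nonneg_of_nonpos (_root_.zpow_pos two_pos _).le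
        (by exact_mod_cast (by omega : m + 1 ≤ 0))
    exact (hx.2.trans_le this).not_ge h.1
  · refine ⟨tailWeight N, tailWeight_ne_zero hN, tailWeight_ne_top N,
      fun x hx => weight_of_mem_tail ?_⟩
    rw [dyadicI_zero] at hx
    exact ⟨hx.1, hx.2.trans_le (zpow_le_zpow_right₀ one_le_two (by omega))⟩
  · obtain ⟨L, hL⟩ := dyadicI_subset_Ico_two_zpow (k := k) hm
    obtain ⟨v, hv0, hvtop, hv⟩ := weight_eqOn_Ico_two_zpow hN L
    exact ⟨v, hv0, hvtop, hv.mono hL⟩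

lemma apTerm_weight_dyadicI_natCast_le {p : ℝ} (hp : 1 < p) {N n : ℕ} (hN : 1 ≤ N)
    (hn : n < N) : apTerm p (weight N) (dyadicI n 0) ≤ 2 * N := by
  have hw : avg1 (weight N) (dyadicI n 0) ≤ (2:ℝ≥0∞) ^ (n:ℝ) * N := by
    rw [avg1, inv_volume_dyadicI, dyadicI_zero, Int.cast_natCast,
      ← setLIntegral_weight_Ico_zero_one N]
    gcongr
    exact two_zpow_le_one (by omega)
  have hσ : avg1 (fun x => weight N x ^ (1 - p / (p - 1))) (dyadicI n 0)
      ≤ 2 ^ (n:ℝ) * (2:ℝ≥0∞) ^ (1 / (p - 1) - n * (p / (p - 1))) := by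
    rw [avg1, inv_volume_dyadicI, dyadicI_zero, Int.cast_natCast]
    gcongr
    exact setLIntegral_weight_rpow_Ico_zero_le hp hN (j := N - n) (by omega)
  have hexp : (n:ℝ) + (n + (1 / (p - 1) - n * (p / (p - 1)))) * (p - 1) = 1 := by
    field_simp [(sub_pos.2 hp).ne']
    ring
  calc apTerm p (weight N) (dyadicI n 0)
      ≤ (2:ℝ≥0∞) ^ (n:ℝ) * N * (2 ^ (n:ℝ) * 2 ^ (1 / (p - 1) - n * (p / (p - 1)))) ^ (p - 1) := by
        unfold apTerm
        gcongr
    _ = 2 * N := by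
        rw [← two_rpow_add, ← ENNReal.rpow_mul, mul_right_comm, ← two_rpow_add, hexp,
          ENNReal.rpow_one]

lemma apTerm_weight_dyadicI_le_of_nonpos {p : ℝ} (hp : 1 < p) {N : ℕ} (hN : 1 ≤ N) {k : ℤ}
    (hk : k ≤ 0) : apTerm p (weight N) (dyadicI k 0) ≤ 2 ^ (p + 1) * N := by
  have hw : avg1 (weight N) (dyadicI k 0) ≤ 2 * N := by
    refine (avg1_dyadicI_zero_le_of_nonpos (fun x hx => weight_of_notMem hx) hk).trans ?_
    rw [setLIntegral_weight_Ico_zero_one, two_mul]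
    gcongr
    exact_mod_cast hN
  have hσ : avg1 (fun x => weight N x ^ (1 - p / (p - 1))) (dyadicI k 0)
      ≤ (2:ℝ≥0∞) ^ (1 / (p - 1) + 1) := by
    refine (avg1_dyadicI_zero_le_of_nonpos (fun x hx => by simp [weight_of_notMem hx]) hk).trans
      ?_
    have h0 := setLIntegral_weight_rpow_Ico_zero_le hp hN (k := 0) (j := N) (by omega)
    have h1 : (1:ℝ≥0∞) ≤ 2 ^ (1 / (p - 1)) :=
      ENNReal.one_le_rpow one_le_two (one_div_pos.2 (sub_pos.2 hp))
    simp only [CharP.cast_eq_zero, neg_zero, zpow_zero, zero_mul, sub_zero] at h0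
    rw [two_rpow_add, ENNReal.rpow_one, mul_two]
    exact add_le_add h0 h1
  calc apTerm p (weight N) (dyadicI k 0) ≤ 2 * N * ((2:ℝ≥0∞) ^ (1 / (p - 1) + 1)) ^ (p - 1) := by
        unfold apTerm
        gcongr
    _ = 2 ^ (p + 1) * N := by
        rw [← ENNReal.rpow_mul, show (1 / (p - 1) + 1) * (p - 1) = p by
          field_simp [(sub_pos.2 hp).ne']; ring, two_rpow_add, ENNReal.rpow_one]
        ring

lemma Ap1_weight_le {p : ℝ} (hp : 1 < p) {N : ℕ} (hN : 1 ≤ N) :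
    Ap1 p (weight N) ≤ 2 ^ (p + 1) * N := by
  have hone : (1:ℝ≥0∞) ≤ 2 ^ (p + 1) * N :=
    one_le_mul (ENNReal.one_le_rpow one_le_two (by linarith)) (by exact_mod_cast hN)
  refine iSup_le fun ⟨k, m⟩ => show apTerm p (weight N) (dyadicI k m) ≤ _ from ?_
  by_cases h : m ≠ 0 ∨ (N:ℤ) ≤ k
  · obtain ⟨v, hv0, hvtop, hv⟩ := weight_eqOn_dyadicI hN h
    rw [apTerm_eq_one_of_eqOn hp.ne' (measurableSet_dyadicI k m) (volume_dyadicI_ne_zero k m)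
      (volume_dyadicI_ne_top k m) hv0 hvtop hv]
    exact hone
  push Not at h
  obtain ⟨rfl, hkN⟩ := h
  rcases le_or_gt 0 k with hk | hk
  · lift k to ℕ using hk
    refine (apTerm_weight_dyadicI_natCast_le hp hN (by omega)).trans ?_
    gcongr
    calc (2:ℝ≥0∞) = 2 ^ (1:ℝ) := (ENNReal.rpow_one 2).symm
      _ ≤ 2 ^ (p + 1) := ENNReal.rpow_le_rpow_of_exponent_le one_le_two (by linarith)
  · exact apTerm_weight_dyadicI_le_of_nonpos hp hN hk.le

lemma Ap1_weight_lt_top {p : ℝ} (hp : 1 < p) {N : ℕ} (hN : 1 ≤ N) : Ap1 p (weight N) < ∞ :=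
  (Ap1_weight_le hp hN).trans_lt (mul_lt_top (two_rpow_ne_top _).lt_top (natCast_lt_top N))

lemma toReal_Ap1_weight_le {p : ℝ} (hp : 1 < p) {N : ℕ} (hN : 1 ≤ N) :
    (Ap1 p (weight N)).toReal ≤ 2 ^ (p + 1) * N := by
  calc (Ap1 p (weight N)).toReal ≤ ((2:ℝ≥0∞) ^ (p + 1) * N).toReal :=
        ENNReal.toReal_mono (mul_lt_top (two_rpow_ne_top _).lt_top (natCast_lt_top N)).ne
          (Ap1_weight_le hp hN)
    _ = 2 ^ (p + 1) * N := by
        rw [ENNReal.toReal_mul, ← ENNReal.toReal_rpow, ENNReal.toReal_natCast,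
          ENNReal.toReal_ofNat]

lemma one_le_Ap1_weight {p : ℝ} (hp : 1 < p) (N : ℕ) : 1 ≤ Ap1 p (weight N) := by
  have hv : EqOn (weight N) (fun _ => 1) (dyadicI 0 1) := fun x hx =>
    weight_of_notMem fun h => h.2.not_ge (by simpa [dyadicI] using hx.1)
  refine le_of_eq_of_le ?_ (le_iSup (fun km : ℤ × ℤ => apTerm p (weight N) (dyadicI km.1 km.2))
    ((0:ℤ), (1:ℤ)))
  exact (apTerm_eq_one_of_eqOn hp.ne' (measurableSet_dyadicI 0 1) (volume_dyadicI_ne_zero 0 1)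
    (volume_dyadicI_ne_top 0 1) one_ne_zero one_ne_top hv).symm

/-! ### The test function and its square function -/

def block (j : ℕ) (x : ℝ) : ℝ :=
  (Ico (0:ℝ) (2 ^ (-(j:ℤ) - 1))).indicator 1 x - (shell j).indicator 1 x

lemma block_of_mem_left {j : ℕ} {x : ℝ} (hx : x ∈ Ico (0:ℝ) (2 ^ (-(j:ℤ) - 1))) :
    block j x = 1 := by
  have : x ∉ shell j := fun h => h.1.not_gt hx.2
  simp [block, hx, this]

lemma block_of_mem_shell {j : ℕ} {x : ℝ} (hx : x ∈ shell j) : block j x = -1 := by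
  have : x ∉ Ico (0:ℝ) (2 ^ (-(j:ℤ) - 1)) := fun h => hx.1.not_gt h.2
  simp [block, hx, this]

lemma block_of_notMem {j : ℕ} {x : ℝ} (hx : x ∉ Ico (0:ℝ) (2 ^ (-(j:ℤ)))) : block j x = 0 := by
  rw [Ico_zero_two_zpow_eq_union, mem_union, not_or] at hx
  simp [block, hx.1, hx.2]

lemma abs_block_le_one (j : ℕ) (x : ℝ) : |block j x| ≤ 1 := by
  unfold block
  by_cases h1 : x ∈ Ico (0:ℝ) (2 ^ (-(j:ℤ) - 1)) <;> by_cases h2 : x ∈ shell j <;>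
    simp [h1, h2]

lemma measurable_block (j : ℕ) : Measurable (block j) :=
  (measurable_const.indicator measurableSet_Ico).sub
    (measurable_const.indicator (measurableSet_shell j))

lemma integrable_indicator_one_Ico (a b : ℝ) : Integrable ((Ico a b).indicator (1 : ℝ → ℝ)) :=
  (integrable_indicator_iff measurableSet_Ico).2 (integrableOn_const measure_Ico_lt_top.ne)

lemma integrable_block (j : ℕ) : Integrable (block j) :=
  (integrable_indicator_one_Ico _ _).sub (integrable_indicator_one_Ico _ _)

lemma integral_block (j : ℕ) : ∫ x, block j x = 0 := by
  have h : (2:ℝ) ^ (-(j:ℤ)) - 2 ^ (-(j:ℤ) - 1) = 2 ^ (-(j:ℤ) - 1) := by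
    rw [show -(j:ℤ) = -(j:ℤ) - 1 + 1 by ring, zpow_add_one₀ two_ne_zero]
    ring_nf
  unfold block shell
  rw [integral_sub (integrable_indicator_one_Ico _ _) (integrable_indicator_one_Ico _ _),
    integral_indicator_one measurableSet_Ico, integral_indicator_one measurableSet_Ico,
    Real.volume_real_Ico, Real.volume_real_Ico, h]
  simp

lemma block_mul_block_of_lt {i j : ℕ} (hij : i < j) (x : ℝ) :
    block i x * block j x = block j x := by
  by_cases hx : x ∈ Ico (0:ℝ) (2 ^ (-(j:ℤ)))
  · rw [block_of_mem_left ⟨hx.1, hx.2.trans_le (zpow_le_zpow_right₀ one_le_two (by omega))⟩,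
      one_mul]
  · rw [block_of_notMem hx, mul_zero]

lemma block_mul_self (j : ℕ) (x : ℝ) :
    block j x * block j x = (Ico (0:ℝ) (2 ^ (-(j:ℤ)))).indicator 1 x := by
  by_cases hx : x ∈ Ico (0:ℝ) (2 ^ (-(j:ℤ)))
  · rw [indicator_of_mem hx]
    rcases (Ico_zero_two_zpow_eq_union (j:ℤ) ▸ hx) with hx | hx
    · simp [block_of_mem_left hx]
    · simp [block_of_mem_shell hx]
  · rw [indicator_of_notMem hx, block_of_notMem hx, mul_zero]

lemma integral_block_mul_block (i j : ℕ) :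
    ∫ x, block i x * block j x = if i = j then (2:ℝ) ^ (-(j:ℤ)) else 0 := by
  rcases lt_trichotomy i j with hij | rfl | hij
  · simp only [block_mul_block_of_lt hij, integral_block, hij.ne, if_false]
  · simp only [block_mul_self, integral_indicator_one measurableSet_Ico, Real.volume_real_Ico,
      sub_zero, if_true]
    exact max_eq_left (_root_.zpow_pos two_pos _).le
  · simp only [mul_comm (block i _), block_mul_block_of_lt hij, integral_block, hij.ne',
      if_false]

lemma haar_natCast_zero (j : ℕ) (x : ℝ) : haar j 0 x = 2 ^ ((j:ℝ) / 2) * block j x := by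
  have hmid : (2:ℝ) ^ (-(j:ℤ)) * ((0:ℤ) + 1 / 2) = 2 ^ (-(j:ℤ) - 1) := by
    rw [zpow_sub₀ two_ne_zero]
    ring
  simp only [haar, block, shell, Int.cast_natCast, hmid]
  simp only [Int.cast_zero, mul_zero, zero_add, mul_one]
  rfl

def testFn (N : ℕ) (x : ℝ) : ℝ := ∑ j ∈ Finset.range N, (-1) ^ j * block j x

lemma measurable_testFn (N : ℕ) : Measurable (testFn N) :=
  Finset.measurable_sum _ fun j _ => (measurable_block j).const_mul _

lemma testFn_of_notMem {N : ℕ} {x : ℝ} (hx : x ∉ Ico (0:ℝ) 1) : testFn N x = 0 :=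
  Finset.sum_eq_zero fun j _ => by
    rw [block_of_notMem fun h => hx (Ico_zero_two_zpow_subset_Ico_zero_one (by omega) h),
      mul_zero]

lemma abs_sum_range_neg_one_pow_le_one (n : ℕ) : |∑ j ∈ Finset.range n, (-1:ℝ) ^ j| ≤ 1 := by
  rw [neg_one_geom_sum]
  split_ifs <;> norm_num

lemma testFn_of_mem_shell {N n : ℕ} (hn : n < N) {x : ℝ} (hx : x ∈ shell n) :
    testFn N x = ∑ j ∈ Finset.range n, (-1) ^ j - (-1) ^ n := by
  have hzero : ∀ j ∈ Finset.range N, j ∉ Finset.range (n + 1) → (-1:ℝ) ^ j * block j x = 0 :=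
    fun j _ hj => by
      rw [block_of_notMem fun h => by
        have := le_of_mem_shell_of_lt hx h.2
        simp at hj
        omega, mul_zero]
  rw [testFn, ← Finset.sum_subset (Finset.range_subset_range.2 hn) hzero, Finset.sum_range_succ,
    block_of_mem_shell hx, sub_eq_add_neg, mul_neg_one]
  congr 1
  refine Finset.sum_congr rfl fun j hj => ?_
  rw [block_of_mem_left ⟨(_root_.zpow_pos two_pos _).le.trans hx.1,
    hx.2.trans_le (zpow_le_zpow_right₀ one_le_two (by simp at hj; omega))⟩, mul_one]

lemma abs_testFn_le_two (N : ℕ) (x : ℝ) : |testFn N x| ≤ 2 := by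
  by_cases hx1 : x ∈ Ico (0:ℝ) 1
  swap
  · simp [testFn_of_notMem hx1]
  by_cases htail : x < 2 ^ (-(N:ℤ))
  · have : testFn N x = ∑ j ∈ Finset.range N, (-1) ^ j :=
      Finset.sum_congr rfl fun j hj => by
        rw [block_of_mem_left ⟨hx1.1, htail.trans_le (zpow_le_zpow_right₀ one_le_two
          (by simp at hj; omega))⟩, mul_one]
    rw [this]
    linarith [abs_sum_range_neg_one_pow_le_one N]
  · obtain ⟨n, hn, hxn⟩ := exists_lt_mem_shell ⟨not_lt.1 htail, hx1.2⟩
    rw [testFn_of_mem_shell hn hxn]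
    calc _ ≤ |∑ j ∈ Finset.range n, (-1:ℝ) ^ j| + |(-1:ℝ) ^ n| := abs_sub _ _
      _ ≤ 1 + 1 := by gcongr; exact abs_sum_range_neg_one_pow_le_one n; simp
      _ = 2 := by norm_num

lemma integral_haar_mul_testFn {N j : ℕ} (hj : j < N) :
    ∫ x, haar j 0 x * testFn N x = 2 ^ ((j:ℝ) / 2) * ((-1) ^ j * 2 ^ (-(j:ℤ))) := by
  have hterm (i : ℕ) : Integrable fun x => 2 ^ ((j:ℝ) / 2) * (-1) ^ i * (block j x * block i x) :=
    ((integrable_block i).bdd_mul (measurable_block j).aestronglyMeasurable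
      (ae_of_all _ fun x => (abs_block_le_one j x))).const_mul _
  simp_rw [haar_natCast_zero, testFn, Finset.mul_sum,
    show ∀ i x, 2 ^ ((j:ℝ) / 2) * block j x * ((-1) ^ i * block i x)
      = 2 ^ ((j:ℝ) / 2) * (-1) ^ i * (block j x * block i x) from fun _ _ => by ring]
  rw [integral_finsetSum _ fun i _ => hterm i]
  simp_rw [integral_const_mul, integral_block_mul_block, mul_ite, mul_zero]
  rw [Finset.sum_ite_eq (Finset.range N) j, if_pos (Finset.mem_range.2 hj)]
  ring

lemma inv_volume_mul_sq_integral_haar_mul_testFn {N j : ℕ} (hj : j < N) :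
    (volume (dyadicI j 0))⁻¹ * (‖∫ x, haar j 0 x * testFn N x‖₊ : ℝ≥0∞) ^ 2 = 1 := by
  have hsq : ‖(2:ℝ) ^ ((j:ℝ) / 2) * ((-1) ^ j * 2 ^ (-(j:ℤ)))‖ ^ 2 = 2 ^ (-(j:ℤ)) := by
    have h : ((2:ℝ) ^ ((j:ℝ) / 2)) ^ 2 = 2 ^ j := by
      rw [← Real.rpow_natCast, ← Real.rpow_mul zero_le_two]
      norm_num
    rw [Real.norm_eq_abs, sq_abs, mul_pow, mul_pow, h, ← pow_mul, mul_comm j 2, pow_mul]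
    simp [zpow_neg]
    field_simp
  rw [integral_haar_mul_testFn hj, ← ENNReal.ofReal_coe_nnreal, coe_nnnorm,
    ← ENNReal.ofReal_pow (norm_nonneg _),
    hsq, ← sub_zero ((2:ℝ) ^ (-(j:ℤ))), ← Real.volume_Ico, ← dyadicI_zero]
  exact ENNReal.inv_mul_cancel (volume_dyadicI_ne_zero _ _) (volume_dyadicI_ne_top _ _)

lemma rpow_half_le_haarSq_testFn {N : ℕ} {x : ℝ} (hx : x ∈ Ico (0:ℝ) (2 ^ (-(N:ℤ)))) :
    (N:ℝ≥0∞) ^ (1 / 2 : ℝ) ≤ haarSq (testFn N) x := by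
  unfold haarSq
  gcongr
  have hemb : Function.Injective fun j : ℕ => ((j:ℤ), (0:ℤ)) := fun a b h => by simpa using h
  calc (N:ℝ≥0∞) = ∑ j ∈ Finset.range N, 1 := by simp
    _ = ∑ km ∈ (Finset.range N).map ⟨_, hemb⟩, (dyadicI km.1 km.2).indicator
          (fun _ => (volume (dyadicI km.1 km.2))⁻¹ *
            (‖∫ y, haar km.1 km.2 y * testFn N y‖₊ : ℝ≥0∞) ^ 2) x := by
        rw [Finset.sum_map]
        refine Finset.sum_congr rfl fun j hj => ?_
        have hjN : j < N := Finset.mem_range.1 hj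
        have hmem : x ∈ dyadicI j 0 := by
          rw [dyadicI_zero]
          exact ⟨hx.1, hx.2.trans_le (zpow_le_zpow_right₀ one_le_two (by omega))⟩
        simp only [Function.Embedding.coeFn_mk, indicator_of_mem hmem,
          inv_volume_mul_sq_integral_haar_mul_testFn hjN]
    _ ≤ _ := ENNReal.sum_le_tsum _

/-! ### The weak-type norm of `S` on `L^p(w_N)` -/

lemma lpNorm1_testFn_le {p : ℝ} (hp : 0 < p) (N : ℕ) :
    lpNorm1 p (weight N) (testFn N) ≤ 2 * (N:ℝ≥0∞) ^ (1 / p) := by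
  have hpt (x : ℝ) : (‖testFn N x‖₊ : ℝ≥0∞) ^ p * weight N x
      ≤ (Ico (0:ℝ) 1).indicator (fun y => 2 ^ p * weight N y) x := by
    by_cases hx : x ∈ Ico (0:ℝ) 1
    · rw [indicator_of_mem hx, ← ENNReal.ofReal_coe_nnreal, coe_nnnorm, Real.norm_eq_abs]
      gcongr
      exact ENNReal.ofReal_le_of_le_toReal (by simpa using abs_testFn_le_two N x)
    · simp [indicator_of_notMem hx, testFn_of_notMem hx, ENNReal.zero_rpow_of_pos hp]
  calc lpNorm1 p (weight N) (testFn N)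
      ≤ (∫⁻ x, (Ico (0:ℝ) 1).indicator (fun y => 2 ^ p * weight N y) x) ^ (1 / p) := by
        unfold lpNorm1
        gcongr with x
        exact hpt x
    _ = (2 ^ p * N) ^ (1 / p) := by
        rw [lintegral_indicator measurableSet_Ico, lintegral_const_mul _ (measurable_weight N),
          setLIntegral_weight_Ico_zero_one]
    _ = 2 * (N:ℝ≥0∞) ^ (1 / p) := by
        rw [ENNReal.mul_rpow_of_nonneg _ _ (by positivity), ← ENNReal.rpow_mul,
          mul_one_div_cancel hp.ne', ENNReal.rpow_one]

lemma le_wLpNorm1_haarSq_testFn {p : ℝ} (hp : 0 < p) {N : ℕ} (hN : 1 ≤ N) :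
    (N:ℝ≥0∞) ^ (1 / 2 : ℝ) / 2 * ((N:ℝ≥0∞) / 2) ^ (1 / p)
      ≤ wLpNorm1 p (weight N) (haarSq (testFn N)) := by
  have hN0 : (N:ℝ≥0) ≠ 0 := by exact_mod_cast (by omega : N ≠ 0)
  set t : ℝ≥0 := (N:ℝ≥0) ^ (1 / 2 : ℝ) / 2
  have ht0 : 0 < t := div_pos (NNReal.rpow_pos (pos_iff_ne_zero.2 hN0)) two_pos
  have ht : (t : ℝ≥0∞) = (N:ℝ≥0∞) ^ (1 / 2 : ℝ) / 2 := by
    rw [ENNReal.coe_div two_ne_zero, ENNReal.coe_rpow_of_ne_zero hN0]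
    simp
  have hlt : (t : ℝ≥0∞) < (N:ℝ≥0∞) ^ (1 / 2 : ℝ) := by
    rw [ht]
    refine ENNReal.half_lt_self (ENNReal.rpow_pos ?_ (natCast_ne_top N)).ne'
      (ENNReal.rpow_ne_top_of_nonneg (by norm_num) (natCast_ne_top N))
    exact_mod_cast (by omega : 0 < N)
  calc (N:ℝ≥0∞) ^ (1 / 2 : ℝ) / 2 * ((N:ℝ≥0∞) / 2) ^ (1 / p)
      = t * (∫⁻ x in Ico (0:ℝ) (2 ^ (-(N:ℤ))), weight N x) ^ (1 / p) := by
        rw [ht, setLIntegral_weight_tail, div_eq_mul_inv (N:ℝ≥0∞)]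
    _ ≤ t * (∫⁻ x in {x | (t : ℝ≥0∞) < haarSq (testFn N) x}, weight N x) ^ (1 / p) := by
        gcongr
        exact fun x hx => hlt.trans_le (rpow_half_le_haarSq_testFn hx)
    _ ≤ wLpNorm1 p (weight N) (haarSq (testFn N)) :=
        le_iSup₂ (f := fun (t : ℝ≥0) (_ : 0 < t) =>
          (t : ℝ≥0∞) * (∫⁻ x in {x | (t : ℝ≥0∞) < haarSq (testFn N) x}, weight N x) ^ (1 / p))
          t ht0

lemma le_sqOpNorm_weight {p : ℝ} (hp : 1 ≤ p) {N : ℕ} (hN : 1 ≤ N) :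
    ENNReal.ofReal (1 / 8 * (N:ℝ) ^ (1 / 2 : ℝ)) ≤ sqOpNorm p (weight N) := by
  rw [one_div_mul_eq_div, ENNReal.ofReal_div_of_pos (by norm_num),
    ← ENNReal.ofReal_rpow_of_nonneg (Nat.cast_nonneg N) (by norm_num), ENNReal.ofReal_natCast,
    ENNReal.ofReal_ofNat]
  have hp0 : 0 < p := by linarith
  set a := (N:ℝ≥0∞) ^ (1 / 2 : ℝ)
  set b := (N:ℝ≥0∞) ^ (1 / p)
  set u : ℝ≥0∞ := 2⁻¹
  have hb0 : b ≠ 0 := (ENNReal.rpow_pos (by exact_mod_cast (by omega : 0 < N))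
    (natCast_ne_top N)).ne'
  have hbtop : b ≠ ∞ := ENNReal.rpow_ne_top_of_nonneg (by positivity) (natCast_ne_top N)
  have hu : 2 * u = 1 := ENNReal.mul_inv_cancel two_ne_zero ofNat_ne_top
  have hbu : b * u ≤ ((N:ℝ≥0∞) / 2) ^ (1 / p) := by
    rw [div_eq_mul_inv, ENNReal.mul_rpow_of_nonneg _ _ (by positivity)]
    gcongr
    calc u = u ^ (1:ℝ) := (ENNReal.rpow_one u).symm
      _ ≤ u ^ (1 / p) := ENNReal.rpow_le_rpow_of_exponent_ge (by norm_num [u])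
          ((div_le_one hp0).2 hp)
  refine le_sInf fun C hC => ?_
  have hCb : a * u * (b * u) ≤ C * (2 * b) := by
    calc a * u * (b * u) ≤ a / 2 * ((N:ℝ≥0∞) / 2) ^ (1 / p) := by
          rw [div_eq_mul_inv a]
          gcongr
      _ ≤ wLpNorm1 p (weight N) (haarSq (testFn N)) := le_wLpNorm1_haarSq_testFn hp0 hN
      _ ≤ C * lpNorm1 p (weight N) (testFn N) :=
          hC _ (measurable_testFn N) ((lpNorm1_testFn_le hp0 N).trans_lt
            (mul_lt_top ofNat_lt_top hbtop.lt_top)).ne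
      _ ≤ C * (2 * b) := by gcongr; exact lpNorm1_testFn_le hp0 N
  have h8 : a / 8 = a * u ^ 3 := by
    rw [div_eq_mul_inv, show (8:ℝ≥0∞) = 2 ^ 3 by norm_num, ENNReal.inv_pow]
  rw [h8, ← ENNReal.mul_le_mul_iff_left hb0 hbtop]
  calc a * u ^ 3 * b = a * u * (b * u) * u := by ring
    _ ≤ C * (2 * b) * u := by gcongr
    _ = C * b := by rw [mul_comm (2:ℝ≥0∞) b, ← mul_assoc, mul_assoc, hu, mul_one]

/-- Proposition 5.2: if `‖S‖_{L^p(w)→L^{p,∞}(w)} ≤ Φ([w]_{A_p})` for an increasing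
`Φ : (0,∞) → (0,∞)` and all `w ∈ A_p`, then `Φ(t) ≥ c t^{1/2}` for all large `t`,
with `c, t₀` depending only on `p`. -/
theorem statement17 (p : ℝ) (hp : 1 < p) :
    ∃ c t₀ : ℝ, 0 < c ∧ 0 < t₀ ∧
      ∀ Φ : ℝ → ℝ,
        (∀ s t : ℝ, 0 < s → s ≤ t → Φ s ≤ Φ t) →
        (∀ t : ℝ, 0 < t → 0 < Φ t) →
        (∀ w : ℝ → ℝ≥0∞, Measurable w →
          (∀ k m : ℤ, (∫⁻ x in dyadicI k m, w x) < ∞) →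
          Ap1 p w < ∞ →
          sqOpNorm p w ≤ ENNReal.ofReal (Φ (Ap1 p w).toReal)) →
        ∀ t : ℝ, t₀ ≤ t → c * t ^ (1/2 : ℝ) ≤ Φ t := by
  have hC : (0:ℝ) < 2 ^ (p + 1) := by positivity
  refine ⟨1 / 8 / (2 * 2 ^ (p + 1)) ^ (1 / 2 : ℝ), 2 * 2 ^ (p + 1), by positivity, by positivity,
    fun Φ hΦ _ hbound t ht =>
      le_of_forall_nat_le hΦ hC (by norm_num) (by norm_num) (fun N hN => ?_) ht⟩
  have hAp := Ap1_weight_lt_top hp hN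
  have hS := (le_sqOpNorm_weight hp.le hN).trans
    (hbound _ (measurable_weight N) (setLIntegral_weight_dyadicI_lt_top N) hAp)
  refine ⟨_, ENNReal.toReal_pos (zero_lt_one.trans_le (one_le_Ap1_weight hp N)).ne' hAp.ne,
    toReal_Ap1_weight_le hp hN, (ENNReal.ofReal_le_ofReal_iff'.1 hS).resolve_right ?_⟩
  exact not_le.2 (mul_pos (by norm_num) (Real.rpow_pos_of_pos (by exact_mod_cast hN) _))


end Paper1D
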